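/- Under the factor model and the quadratic regression model, if either condition (C1) Δ = 3 or condition (C2) diag(Γ₀ᵀΩΓ₀) = 0 holds, then the intercept satisfies α = E(Y) − tr(Σ⁻¹ Λ_y)/2; equivalently, E(Y) = α + tr(ΩΣ). (This is the intercept part of Proposition 1.) -/

import Mathlib

/-!
Write `x - u = Γ₀ z`, `M = Γ₀ᵀ Ω Γ₀` and `P = Γ₀ᵀ Σ⁻¹ Γ₀`. The regression function becomes
`α + zᵀ Γ₀ᵀ β + zᵀ M z` and `(x - u)ᵀ Σ⁻¹ (x - u) = zᵀ P z`, so `tr(Σ⁻¹ Λ_y) = E[(Y - E Y) zᵀ P z]`.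
Taking expectations, `E Y = α + tr M = α + tr(Ω Σ)`. Since `zᵀ P z` is a function of `x`, it may
be multiplied by `E(Y | x)` instead of `Y`; the third moments of `z` kill the linear term and
its fourth moments `E[z_a z_b z_i z_j] = δ_ab δ_ij + δ_ai δ_bj + δ_aj δ_bi + (Δ - 3) δ_abij` give
`tr(Σ⁻¹ Λ_y) = tr(P Mᵀ) + tr(P M) + (Δ - 3) ∑_a P_aa M_aa`. As `P` is symmetric with
`P Γ₀ᵀ = Γ₀ᵀ`, both traces equal `tr M`, while (C1) or (C2) kills the last term.
-/

open Matrix MeasureTheory ProbabilityTheory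

section QuadraticForm

variable {ι κ : Type*} [Fintype ι] [Fintype κ]

lemma dotProduct_mulVec_self_eq_sum (C : Matrix ι ι ℝ) (v : ι → ℝ) :
    v ⬝ᵥ C *ᵥ v = ∑ a, ∑ b, C a b * (v a * v b) := by
  simp only [dotProduct, mulVec, Finset.mul_sum]
  exact Finset.sum_congr rfl fun a _ => Finset.sum_congr rfl fun b _ => by ring

lemma mulVec_dotProduct_mulVec_mulVec (A : Matrix κ ι ℝ) (B : Matrix κ κ ℝ) (v : ι → ℝ) :
    A *ᵥ v ⬝ᵥ B *ᵥ A *ᵥ v = v ⬝ᵥ (Aᵀ * B * A) *ᵥ v := by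
  rw [dotProduct_comm, ← dotProduct_transpose_mulVec, mulVec_mulVec, mulVec_mulVec,
    Matrix.mul_assoc]

lemma trace_mul_of_mul_mul (S : Matrix κ κ ℝ) (g : ℝ) (v : κ → ℝ) :
    trace (S * of fun k l => g * v k * v l) = g * (v ⬝ᵥ S *ᵥ v) := by
  simp only [trace, Matrix.diag, mul_apply, of_apply, dotProduct, mulVec, Finset.mul_sum]
  exact Finset.sum_congr rfl fun k _ => Finset.sum_congr rfl fun l _ => by ring

-- `E[z_a z_b z_i z_j]` for independent standardized coordinates with `E z_k⁴ = Δ`;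
-- for `Δ = 3` this is Isserlis' formula.
def fourthMoment [DecidableEq ι] (Δ : ℝ) (a b i j : ι) : ℝ :=
  (if a = b ∧ i = j then 1 else 0) + (if a = i ∧ b = j then 1 else 0) +
    (if a = j ∧ b = i then 1 else 0) + (if a = b ∧ b = i ∧ i = j then Δ - 3 else 0)

lemma sum_mul_fourthMoment [DecidableEq ι] (A B : Matrix ι ι ℝ) (Δ : ℝ) :
    ∑ a, ∑ b, ∑ i, ∑ j, A a b * B i j * fourthMoment Δ a b i j =
      trace A * trace B + trace (A * Bᵀ) + trace (A * B) + (Δ - 3) * ∑ a, A a a * B a a := by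
  simp only [fourthMoment, ite_and, mul_add, mul_ite, mul_one, mul_zero, Finset.sum_add_distrib,
    Finset.sum_ite_irrel, Finset.sum_ite_eq, Finset.mem_univ, ↓reduceIte, Finset.sum_const_zero,
    trace, diag_apply, Finset.mul_sum, Finset.sum_mul, mul_apply, transpose_apply]
  congr 1
  · rw [Finset.sum_comm]
  · exact Finset.sum_congr rfl fun _ _ => by ring

end QuadraticForm

section Projection

variable {n p : Type*} [Fintype n] [Fintype p] {Γ : Matrix p n ℝ}
  {S : Matrix p p ℝ}

lemma transpose_mul_inv_mul_mul_transpose [DecidableEq p] (hΓ : Γ * Γᵀ = S) (hS : IsUnit S.det) :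
    Γᵀ * S⁻¹ * Γ * Γᵀ = Γᵀ := by
  rw [Matrix.mul_assoc, hΓ, Matrix.mul_assoc, nonsing_inv_mul _ hS, Matrix.mul_one]

lemma transpose_transpose_mul_inv_mul [DecidableEq p] (hΓ : Γ * Γᵀ = S) :
    (Γᵀ * S⁻¹ * Γ)ᵀ = Γᵀ * S⁻¹ * Γ := by
  have hS : Sᵀ = S := by rw [← hΓ, transpose_mul, transpose_transpose]
  rw [transpose_mul, transpose_mul, transpose_transpose, transpose_nonsing_inv, hS,
    Matrix.mul_assoc]

lemma trace_transpose_mul_mul (hΓ : Γ * Γᵀ = S) (B : Matrix p p ℝ) :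
    trace (Γᵀ * B * Γ) = trace (B * S) := by
  rw [trace_mul_cycle, hΓ, trace_mul_comm]

lemma trace_mul_transpose_add_trace_mul [DecidableEq p] (hΓ : Γ * Γᵀ = S) (hS : IsUnit S.det)
    (B : Matrix p p ℝ) :
    trace (Γᵀ * S⁻¹ * Γ * (Γᵀ * B * Γ)ᵀ) + trace (Γᵀ * S⁻¹ * Γ * (Γᵀ * B * Γ)) =
      2 * trace (B * S) := by
  have hfix : Γᵀ * S⁻¹ * Γ * (Γᵀ * B * Γ) = Γᵀ * B * Γ := by
    simp only [← Matrix.mul_assoc]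
    rw [transpose_mul_inv_mul_mul_transpose hΓ hS]
  rw [← trace_transpose (_ * _ᵀ), transpose_mul, transpose_transpose,
    transpose_transpose_mul_inv_mul hΓ, trace_mul_comm, hfix, trace_transpose_mul_mul hΓ]
  ring

end Projection

instance ENNReal.holderTriple_four_four_two : ENNReal.HolderTriple 4 4 2 :=
  ⟨by rw [← two_mul, show (4 : ENNReal) = 2 * 2 by norm_num, ENNReal.mul_inv (by simp) (by simp),
    ← mul_assoc, ENNReal.mul_inv_cancel (by simp) (by simp), one_mul]⟩

section Integrability

variable {ι κ Ω : Type*} [MeasurableSpace Ω] {μ : Measure Ω}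

lemma memLp_four_of_integrable_pow_four {f : Ω → ℝ} (hf : AEStronglyMeasurable f μ)
    (h : Integrable (fun ω => f ω ^ 4) μ) : MemLp f 4 μ := by
  rw [← integrable_norm_rpow_iff hf (by norm_num) (by norm_num)]
  simpa [Even.pow_abs (show Even 4 by decide)] using h

lemma integral_sum_sum [Fintype ι] [Fintype κ] {f : ι → κ → Ω → ℝ}
    (hf : ∀ a b, Integrable (f a b) μ) :
    ∫ ω, ∑ a, ∑ b, f a b ω ∂μ = ∑ a, ∑ b, ∫ ω, f a b ω ∂μ := by
  rw [integral_finsetSum _ fun a _ => integrable_finsetSum _ fun b _ => hf a b]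
  exact Finset.sum_congr rfl fun a _ => integral_finsetSum _ fun b _ => hf a b

lemma integral_trace_mul [Fintype κ] (S : Matrix κ κ ℝ) {F : κ → κ → Ω → ℝ}
    (hF : ∀ k l, Integrable (F k l) μ) :
    ∫ ω, trace (S * of fun k l => F k l ω) ∂μ = trace (S * of fun k l => ∫ ω, F k l ω ∂μ) := by
  simp only [trace, Matrix.diag, mul_apply, of_apply]
  rw [integral_sum_sum (f := fun k l ω => S k l * F l k ω) fun k l => (hF l k).const_mul _]
  simp_rw [integral_const_mul]

variable {X : Ω → ι → ℝ}

lemma memLp_four_mulVec_apply [Fintype ι] (hX : ∀ k, MemLp (fun ω => X ω k) 4 μ)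
    (A : Matrix κ ι ℝ) (k : κ) :
    MemLp (fun ω => (A *ᵥ X ω) k) 4 μ :=
  memLp_finsetSum _ fun i _ => (hX i).const_mul (A k i)

lemma memLp_four_dotProduct [Fintype ι] (hX : ∀ k, MemLp (fun ω => X ω k) 4 μ) (c : ι → ℝ) :
    MemLp (fun ω => X ω ⬝ᵥ c) 4 μ :=
  memLp_finsetSum _ fun i _ => (hX i).mul_const (c i)

lemma memLp_two_mul (hX : ∀ k, MemLp (fun ω => X ω k) 4 μ) (a b : ι) :
    MemLp (fun ω => X ω a * X ω b) 2 μ :=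
  (hX b).mul' (hX a)

lemma memLp_two_dotProduct_mulVec [Fintype ι] (hX : ∀ k, MemLp (fun ω => X ω k) 4 μ)
    (C : Matrix ι ι ℝ) :
    MemLp (fun ω => X ω ⬝ᵥ C *ᵥ X ω) 2 μ := by
  simp_rw [dotProduct_mulVec_self_eq_sum]
  exact memLp_finsetSum _ fun a _ => memLp_finsetSum _ fun b _ => (memLp_two_mul hX a b).const_mul _

lemma trace_mul_integral_mul_mul [Fintype ι] (S : Matrix ι ι ℝ) {g : Ω → ℝ} (hg : MemLp g 2 μ)
    (hX : ∀ k, MemLp (fun ω => X ω k) 4 μ) :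
    trace (S * of fun k l => ∫ ω, g ω * X ω k * X ω l ∂μ) = ∫ ω, g ω * (X ω ⬝ᵥ S *ᵥ X ω) ∂μ := by
  rw [← integral_trace_mul S fun k l => (hg.integrable_mul (memLp_two_mul hX k l)).congr
    (.of_forall fun ω => by simp only [Pi.mul_apply]; ring)]
  simp_rw [trace_mul_of_mul_mul]

end Integrability

section Moments

variable {ι Ω : Type*} [MeasurableSpace Ω] {μ : Measure Ω} {z : Ω → ι → ℝ}

lemma integral_mul_eq_zero_of_notMem (hmeas : ∀ k, Measurable fun ω => z ω k)
    (hindep : iIndepFun (fun k ω => z ω k) μ) {k : ι} (hk : ∫ ω, z ω k ∂μ = 0) {s : Finset ι}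
    (hks : k ∉ s) {g : (s → ℝ) → ℝ} (hg : Measurable g) :
    ∫ ω, z ω k * g (fun l => z ω l) ∂μ = 0 := by
  have hind := (hindep.indepFun_finset {k} s (Finset.disjoint_singleton_left.2 hks) hmeas).comp
    (measurable_pi_apply ⟨k, Finset.mem_singleton_self k⟩) hg
  refine (hind.integral_fun_mul_eq_mul_integral (hmeas k).aestronglyMeasurable
    (hg.comp (measurable_pi_lambda _ fun l => hmeas l)).aestronglyMeasurable).trans ?_
  simp [hk]

lemma integral_mul_eq_ite [DecidableEq ι] (hmeas : ∀ k, Measurable fun ω => z ω k)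
    (hindep : iIndepFun (fun k ω => z ω k) μ) (hm1 : ∀ k, ∫ ω, z ω k ∂μ = 0)
    (hm2 : ∀ k, ∫ ω, z ω k ^ 2 ∂μ = 1) (a b : ι) :
    ∫ ω, z ω a * z ω b ∂μ = if a = b then 1 else 0 := by
  rcases eq_or_ne a b with rfl | hab
  · simpa [← sq] using hm2 a
  · rw [if_neg hab]
    exact integral_mul_eq_zero_of_notMem hmeas hindep (hm1 a) (s := {b}) (by simpa using hab)
      (g := fun y => y ⟨b, Finset.mem_singleton_self b⟩) (measurable_pi_apply _)

lemma integral_mul_mul_eq_zero (hmeas : ∀ k, Measurable fun ω => z ω k)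
    (hindep : iIndepFun (fun k ω => z ω k) μ) (hm1 : ∀ k, ∫ ω, z ω k ∂μ = 0)
    (hm3 : ∀ k, ∫ ω, z ω k ^ 3 ∂μ = 0) (a b i : ι) :
    ∫ ω, z ω a * z ω b * z ω i ∂μ = 0 := by
  classical
  have single : ∀ {k l m}, k ≠ l → k ≠ m → ∫ ω, z ω k * (z ω l * z ω m) ∂μ = 0 :=
    fun {k l m} hl hm => integral_mul_eq_zero_of_notMem hmeas hindep (hm1 k) (s := {l, m})
      (by simp [hl, hm]) (g := fun y => y ⟨l, by simp⟩ * y ⟨m, by simp⟩) (by fun_prop)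
  rcases eq_or_ne a b with rfl | hab
  · rcases eq_or_ne a i with rfl | hai
    · simpa [← pow_three'] using hm3 a
    · exact (integral_congr_ae (.of_forall fun ω => by ring)).trans (single hai.symm hai.symm)
  · rcases eq_or_ne a i with rfl | hai
    · exact (integral_congr_ae (.of_forall fun ω => by ring)).trans (single hab.symm hab.symm)
    · exact (integral_congr_ae (.of_forall fun ω => by ring)).trans (single hab hai)

lemma integral_mul_mul_mul_eq_fourthMoment [DecidableEq ι] (hmeas : ∀ k, Measurable fun ω => z ω k)
    (hindep : iIndepFun (fun k ω => z ω k) μ) (hm1 : ∀ k, ∫ ω, z ω k ∂μ = 0)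
    (hm2 : ∀ k, ∫ ω, z ω k ^ 2 ∂μ = 1) {Δ : ℝ} (hm4 : ∀ k, ∫ ω, z ω k ^ 4 ∂μ = Δ)
    (a b i j : ι) :
    ∫ ω, z ω a * z ω b * z ω i * z ω j ∂μ = fourthMoment Δ a b i j := by
  -- An index occurring exactly once makes the moment vanish; what remains is the case of four
  -- equal indices and the three ways of pairing two distinct ones.
  unfold fourthMoment
  have single : ∀ {k l m n}, k ≠ l → k ≠ m → k ≠ n →
      ∫ ω, z ω k * (z ω l * z ω m * z ω n) ∂μ = 0 :=
    fun {k l m n} hl hm hn => integral_mul_eq_zero_of_notMem hmeas hindep (hm1 k)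
      (s := {l, m, n}) (by simp [hl, hm, hn])
      (g := fun y => y ⟨l, by simp⟩ * y ⟨m, by simp⟩ * y ⟨n, by simp⟩) (by fun_prop)
  have pair : ∀ {k l}, k ≠ l → ∫ ω, z ω k ^ 2 * z ω l ^ 2 ∂μ = 1 := fun {k l} hkl => by
    refine (((hindep.indepFun hkl).comp (measurable_id.pow_const 2)
      (measurable_id.pow_const 2)).integral_fun_mul_eq_mul_integral
      ((hmeas k).pow_const 2).aestronglyMeasurable
      ((hmeas l).pow_const 2).aestronglyMeasurable).trans ?_
    simp [hm2]
  rcases eq_or_ne a b with rfl | hab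
  · rcases eq_or_ne i j with rfl | hij
    · rcases eq_or_ne a i with rfl | hai
      · rw [(integral_congr_ae (.of_forall fun ω => by ring)).trans (hm4 a)]
        simp only [and_self, if_true]
        ring
      · rw [(integral_congr_ae (.of_forall fun ω => by ring)).trans (pair hai)]
        simp [hai]
    · rcases eq_or_ne a j with rfl | haj
      · rw [(integral_congr_ae (.of_forall fun ω => by ring)).trans (single hij hij hij)]
        simp [hij, hij.symm]
      · rw [(integral_congr_ae (.of_forall fun ω => by ring)).trans
          (single haj.symm haj.symm hij.symm)]
        simp [haj, hij]
  · rcases eq_or_ne a i with rfl | hai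
    · rcases eq_or_ne b j with rfl | hbj
      · rw [(integral_congr_ae (.of_forall fun ω => by ring)).trans (pair hab)]
        simp [hab]
      · rw [(integral_congr_ae (.of_forall fun ω => by ring)).trans
          (single hab.symm hab.symm hbj)]
        simp [hab, hab.symm, hbj]
    · rcases eq_or_ne a j with rfl | haj
      · rcases eq_or_ne b i with rfl | hbi
        · rw [(integral_congr_ae (.of_forall fun ω => by ring)).trans (pair hab)]
          simp [hab]
        · rw [(integral_congr_ae (.of_forall fun ω => by ring)).trans
            (single hab.symm hbi hab.symm)]
          simp [hab, hab.symm, hbi]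
      · rw [(integral_congr_ae (.of_forall fun ω => by ring)).trans (single hab hai haj)]
        simp [hab, hai, haj]

end Moments

section QuadraticMoments

variable {ι Ω : Type*} [Fintype ι] [MeasurableSpace Ω] {μ : Measure Ω} {z : Ω → ι → ℝ}

lemma integral_dotProduct_eq_zero [IsFiniteMeasure μ] (hz : ∀ k, MemLp (fun ω => z ω k) 4 μ)
    (hm1 : ∀ k, ∫ ω, z ω k ∂μ = 0) (c : ι → ℝ) :
    ∫ ω, z ω ⬝ᵥ c ∂μ = 0 := by
  simp only [dotProduct]
  rw [integral_finsetSum _ fun k _ => ((hz k).integrable (by norm_num)).mul_const _]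
  simp [integral_mul_const, hm1]

lemma integral_dotProduct_mulVec_self [IsFiniteMeasure μ]
    (hmeas : ∀ k, Measurable fun ω => z ω k)
    (hindep : iIndepFun (fun k ω => z ω k) μ) (hz : ∀ k, MemLp (fun ω => z ω k) 4 μ)
    (hm1 : ∀ k, ∫ ω, z ω k ∂μ = 0) (hm2 : ∀ k, ∫ ω, z ω k ^ 2 ∂μ = 1) (C : Matrix ι ι ℝ) :
    ∫ ω, z ω ⬝ᵥ C *ᵥ z ω ∂μ = trace C := by
  classical
  simp_rw [dotProduct_mulVec_self_eq_sum]
  rw [integral_sum_sum (f := fun a b ω => C a b * (z ω a * z ω b))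
    fun a b => ((memLp_two_mul hz a b).integrable one_le_two).const_mul _]
  simp [integral_const_mul, integral_mul_eq_ite hmeas hindep hm1 hm2, trace]

lemma integral_dotProduct_mulVec_self_mul_dotProduct [IsFiniteMeasure μ]
    (hmeas : ∀ k, Measurable fun ω => z ω k)
    (hindep : iIndepFun (fun k ω => z ω k) μ) (hz : ∀ k, MemLp (fun ω => z ω k) 4 μ)
    (hm1 : ∀ k, ∫ ω, z ω k ∂μ = 0) (hm3 : ∀ k, ∫ ω, z ω k ^ 3 ∂μ = 0)
    (C : Matrix ι ι ℝ) (c : ι → ℝ) :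
    ∫ ω, (z ω ⬝ᵥ C *ᵥ z ω) * (z ω ⬝ᵥ c) ∂μ = 0 := by
  have expand : ∀ ω, (z ω ⬝ᵥ C *ᵥ z ω) * (z ω ⬝ᵥ c) =
      ∑ a, ∑ b, ∑ i, C a b * c i * (z ω a * z ω b * z ω i) := fun ω => by
    rw [dotProduct_mulVec_self_eq_sum, dotProduct]
    simp only [Finset.sum_mul]
    simp only [Finset.mul_sum]
    exact Finset.sum_congr rfl fun a _ => Finset.sum_congr rfl fun b _ =>
      Finset.sum_congr rfl fun i _ => by ring
  have hint : ∀ a b i, Integrable (fun ω => z ω a * z ω b * z ω i) μ := fun a b i =>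
    (memLp_two_mul hz a b).integrable_mul ((hz i).mono_exponent (p := 2) (by norm_num))
  simp_rw [expand]
  rw [integral_sum_sum (f := fun a b ω => ∑ i, C a b * c i * (z ω a * z ω b * z ω i))
    fun a b => integrable_finsetSum _ fun i _ => (hint a b i).const_mul _]
  refine Finset.sum_eq_zero fun a _ => Finset.sum_eq_zero fun b _ => ?_
  rw [integral_finsetSum _ fun i _ => (hint a b i).const_mul _]
  simp [integral_const_mul, integral_mul_mul_eq_zero hmeas hindep hm1 hm3]

lemma integral_dotProduct_mulVec_self_mul_self
    (hmeas : ∀ k, Measurable fun ω => z ω k)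
    (hindep : iIndepFun (fun k ω => z ω k) μ) (hz : ∀ k, MemLp (fun ω => z ω k) 4 μ)
    (hm1 : ∀ k, ∫ ω, z ω k ∂μ = 0) (hm2 : ∀ k, ∫ ω, z ω k ^ 2 ∂μ = 1) {Δ : ℝ}
    (hm4 : ∀ k, ∫ ω, z ω k ^ 4 ∂μ = Δ) (A B : Matrix ι ι ℝ) :
    ∫ ω, (z ω ⬝ᵥ A *ᵥ z ω) * (z ω ⬝ᵥ B *ᵥ z ω) ∂μ =
      trace A * trace B + trace (A * Bᵀ) + trace (A * B) + (Δ - 3) * ∑ a, A a a * B a a := by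
  classical
  have expand : ∀ ω, (z ω ⬝ᵥ A *ᵥ z ω) * (z ω ⬝ᵥ B *ᵥ z ω) =
      ∑ a, ∑ b, ∑ i, ∑ j, A a b * B i j * (z ω a * z ω b * z ω i * z ω j) := fun ω => by
    simp only [dotProduct_mulVec_self_eq_sum, Finset.sum_mul]
    simp only [Finset.mul_sum]
    exact Finset.sum_congr rfl fun a _ => Finset.sum_congr rfl fun b _ =>
      Finset.sum_congr rfl fun i _ => Finset.sum_congr rfl fun j _ => by ring
  have hint : ∀ a b i j, Integrable (fun ω => z ω a * z ω b * z ω i * z ω j) μ :=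
    fun a b i j => ((memLp_two_mul hz a b).integrable_mul (memLp_two_mul hz i j)).congr
      (.of_forall fun ω => by simp only [Pi.mul_apply]; ring)
  simp_rw [expand]
  rw [integral_sum_sum
    (f := fun a b ω => ∑ i, ∑ j, A a b * B i j * (z ω a * z ω b * z ω i * z ω j))
    fun a b => integrable_finsetSum _ fun i _ =>
      integrable_finsetSum _ fun j _ => (hint a b i j).const_mul _]
  simp_rw [integral_sum_sum fun i j => (hint _ _ i j).const_mul _, integral_const_mul,
    integral_mul_mul_mul_eq_fourthMoment hmeas hindep hm1 hm2 hm4]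
  exact sum_mul_fourthMoment A B Δ

end QuadraticMoments

section RegressionModel

variable {ι Ω : Type*} {m mΩ : MeasurableSpace Ω} {μ : Measure Ω} {z : Ω → ι → ℝ} {Y : Ω → ℝ}

lemma integral_mul_condExp [IsFiniteMeasure μ] (hm : m ≤ mΩ) {g : Ω → ℝ}
    (hg : StronglyMeasurable[m] g) (hgY : Integrable (fun ω => g ω * Y ω) μ)
    (hY : Integrable Y μ) :
    ∫ ω, g ω * Y ω ∂μ = ∫ ω, g ω * (μ[Y|m]) ω ∂μ := by
  rw [← integral_condExp hm (f := fun ω => g ω * Y ω)]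
  exact integral_congr_ae (condExp_mul_of_stronglyMeasurable_left hg hgY hY)

lemma stronglyMeasurable_comap_dotProduct_mulVec {κ : Type*} [Fintype ι] [Fintype κ]
    (Γ : Matrix κ ι ℝ) (u : κ → ℝ) (S : Matrix κ κ ℝ) :
    StronglyMeasurable[.comap (fun ω => Γ *ᵥ z ω + u) inferInstance]
      fun ω => z ω ⬝ᵥ (Γᵀ * S * Γ) *ᵥ z ω := by
  have hW : (fun ω => z ω ⬝ᵥ (Γᵀ * S * Γ) *ᵥ z ω) =
      (fun v => (v - u) ⬝ᵥ S *ᵥ (v - u)) ∘ fun ω => Γ *ᵥ z ω + u := by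
    ext ω
    simp only [Function.comp_apply, add_sub_cancel_right, mulVec_dotProduct_mulVec_mulVec]
  rw [hW]
  exact ((by fun_prop : Continuous fun v => (v - u) ⬝ᵥ S *ᵥ (v - u)).measurable.comp
    (comap_measurable _)).stronglyMeasurable

variable [Fintype ι] [IsProbabilityMeasure μ] {α : ℝ} {c : ι → ℝ}
  {M : Matrix ι ι ℝ}

lemma integral_eq_of_condExp_eq (hm : m ≤ mΩ) (hmeas : ∀ k, Measurable fun ω => z ω k)
    (hindep : iIndepFun (fun k ω => z ω k) μ) (hz : ∀ k, MemLp (fun ω => z ω k) 4 μ)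
    (hm1 : ∀ k, ∫ ω, z ω k ∂μ = 0) (hm2 : ∀ k, ∫ ω, z ω k ^ 2 ∂μ = 1)
    (hmodel : μ[Y|m] =ᵐ[μ] fun ω => α + z ω ⬝ᵥ c + z ω ⬝ᵥ M *ᵥ z ω) :
    ∫ ω, Y ω ∂μ = α + trace M := by
  have hL : Integrable (fun ω => z ω ⬝ᵥ c) μ :=
    (memLp_four_dotProduct hz c).integrable (by norm_num)
  have hαL : Integrable (fun ω => α + z ω ⬝ᵥ c) μ := (integrable_const α).add hL
  rw [← integral_condExp hm (f := Y), integral_congr_ae hmodel,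
    integral_add hαL ((memLp_two_dotProduct_mulVec hz M).integrable one_le_two),
    integral_add (integrable_const α) hL,
    integral_dotProduct_eq_zero hz hm1, integral_dotProduct_mulVec_self hmeas hindep hz hm1 hm2]
  simp

lemma integral_sub_integral_mul_of_condExp_eq (hm : m ≤ mΩ)
    (hmeas : ∀ k, Measurable fun ω => z ω k) (hindep : iIndepFun (fun k ω => z ω k) μ)
    (hz : ∀ k, MemLp (fun ω => z ω k) 4 μ) (hm1 : ∀ k, ∫ ω, z ω k ∂μ = 0)
    (hm2 : ∀ k, ∫ ω, z ω k ^ 2 ∂μ = 1) (hm3 : ∀ k, ∫ ω, z ω k ^ 3 ∂μ = 0) {Δ : ℝ}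
    (hm4 : ∀ k, ∫ ω, z ω k ^ 4 ∂μ = Δ) (hY : MemLp Y 2 μ)
    (hmodel : μ[Y|m] =ᵐ[μ] fun ω => α + z ω ⬝ᵥ c + z ω ⬝ᵥ M *ᵥ z ω) {P : Matrix ι ι ℝ}
    (hP : StronglyMeasurable[m] fun ω => z ω ⬝ᵥ P *ᵥ z ω) :
    ∫ ω, (Y ω - ∫ ω', Y ω' ∂μ) * (z ω ⬝ᵥ P *ᵥ z ω) ∂μ =
      trace (P * Mᵀ) + trace (P * M) + (Δ - 3) * ∑ a, P a a * M a a := by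
  have hW := memLp_two_dotProduct_mulVec hz P
  have hL := (memLp_four_dotProduct hz c).mono_exponent (p := 2) (by norm_num)
  have hQ := memLp_two_dotProduct_mulVec hz M
  have hWY : ∫ ω, (z ω ⬝ᵥ P *ᵥ z ω) * Y ω ∂μ = α * trace P + (trace P * trace M +
      trace (P * Mᵀ) + trace (P * M) + (Δ - 3) * ∑ a, P a a * M a a) := by
    rw [integral_mul_condExp hm hP (hW.integrable_mul hY) (hY.integrable one_le_two),
      integral_congr_ae (hmodel.mono fun ω hω => by rw [hω])]
    have hWα : Integrable (fun ω => (z ω ⬝ᵥ P *ᵥ z ω) * α) μ :=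
      (hW.integrable one_le_two).mul_const α
    have hWL : Integrable (fun ω => (z ω ⬝ᵥ P *ᵥ z ω) * (z ω ⬝ᵥ c)) μ := hW.integrable_mul hL
    have hWαL : Integrable (fun ω => (z ω ⬝ᵥ P *ᵥ z ω) * α + (z ω ⬝ᵥ P *ᵥ z ω) * (z ω ⬝ᵥ c)) μ :=
      hWα.add hWL
    have hWQ : Integrable (fun ω => (z ω ⬝ᵥ P *ᵥ z ω) * (z ω ⬝ᵥ M *ᵥ z ω)) μ :=
      hW.integrable_mul hQ
    simp_rw [mul_add]
    rw [integral_add hWαL hWQ, integral_add hWα hWL, integral_mul_const,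
      integral_dotProduct_mulVec_self hmeas hindep hz hm1 hm2,
      integral_dotProduct_mulVec_self_mul_dotProduct hmeas hindep hz hm1 hm3,
      integral_dotProduct_mulVec_self_mul_self hmeas hindep hz hm1 hm2 hm4]
    ring
  have hEY := integral_eq_of_condExp_eq hm hmeas hindep hz hm1 hm2 hmodel
  have hsplit : ∀ ω, (Y ω - ∫ ω', Y ω' ∂μ) * (z ω ⬝ᵥ P *ᵥ z ω) =
      (z ω ⬝ᵥ P *ᵥ z ω) * Y ω - (∫ ω', Y ω' ∂μ) * (z ω ⬝ᵥ P *ᵥ z ω) := fun ω => by ring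
  have hWY_int : Integrable (fun ω => (z ω ⬝ᵥ P *ᵥ z ω) * Y ω) μ := hW.integrable_mul hY
  simp_rw [hsplit]
  rw [integral_sub hWY_int ((hW.integrable one_le_two).const_mul _),
    integral_const_mul, hWY, integral_dotProduct_mulVec_self hmeas hindep hz hm1 hm2, hEY]
  ring

end RegressionModel

theorem intercept_explicit_form_general {p q : ℕ} {Ω : Type*} [MeasurableSpace Ω]
    (μ : Measure Ω) [IsProbabilityMeasure μ]
    (z : Ω → Fin q → ℝ) (Γ₀ : Matrix (Fin p) (Fin q) ℝ) (u : Fin p → ℝ)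
    (Sig Om : Matrix (Fin p) (Fin p) ℝ) (Y : Ω → ℝ) (αc : ℝ) (βv : Fin p → ℝ) (Δ : ℝ)
    -- the factor z has i.i.d. coordinates with the stated moments
    (hz_meas : ∀ k, Measurable fun ω => z ω k)
    (hz_indep : iIndepFun (fun k ω => z ω k) μ)
    (hm1 : ∀ k, ∫ ω, z ω k ∂μ = 0)
    (hm2 : ∀ k, ∫ ω, (z ω k) ^ 2 ∂μ = 1)
    (hm3 : ∀ k, ∫ ω, (z ω k) ^ 3 ∂μ = 0)
    (hm4 : ∀ k, ∫ ω, (z ω k) ^ 4 ∂μ = Δ)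
    (hint4 : ∀ k, Integrable (fun ω => (z ω k) ^ 4) μ)
    -- Γ₀Γ₀ᵀ = Σ with Σ positive definite
    (hSig : Γ₀ * Γ₀ᵀ = Sig) (hSigPD : Sig.PosDef)
    -- Y is a square-integrable response
    (hY2 : MemLp Y 2 μ)
    -- the quadratic regression model, with x := Γ₀ z + u (so that x − u = Γ₀ z)
    (hmodel : μ[Y | MeasurableSpace.comap (fun ω => Γ₀.mulVec (z ω) + u) inferInstance]
        =ᵐ[μ] fun ω => αc + Γ₀.mulVec (z ω) ⬝ᵥ βv +
          Γ₀.mulVec (z ω) ⬝ᵥ Om.mulVec (Γ₀.mulVec (z ω)))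
    -- condition (C1) or condition (C2)
    (hC : Δ = 3 ∨ ∀ k, (Γ₀ᵀ * Om * Γ₀) k k = 0) :
    αc = (∫ ω, Y ω ∂μ) -
        (Sig⁻¹ * Matrix.of fun k l =>
          ∫ ω, (Y ω - ∫ ω', Y ω' ∂μ) * Γ₀.mulVec (z ω) k * Γ₀.mulVec (z ω) l ∂μ).trace / 2 ∧
      (∫ ω, Y ω ∂μ) = αc + (Om * Sig).trace := by
  set M := Γ₀ᵀ * Om * Γ₀
  have hz4 : ∀ k, MemLp (fun ω => z ω k) 4 μ := fun k =>
    memLp_four_of_integrable_pow_four (hz_meas k).aestronglyMeasurable (hint4 k)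
  have hx : Measurable fun ω => Γ₀ *ᵥ z ω + u := by
    have := measurable_pi_lambda _ hz_meas
    fun_prop
  have hmodel' : μ[Y | .comap (fun ω => Γ₀ *ᵥ z ω + u) inferInstance] =ᵐ[μ]
      fun ω => αc + z ω ⬝ᵥ Γ₀ᵀ *ᵥ βv + z ω ⬝ᵥ M *ᵥ z ω :=
    hmodel.trans (.of_forall fun ω => by
      dsimp only
      rw [mulVec_dotProduct_mulVec_mulVec, dotProduct_transpose_mulVec, dotProduct_comm βv])
  have hEY := integral_eq_of_condExp_eq hx.comap_le hz_meas hz_indep hz4 hm1 hm2 hmodel'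
  rw [trace_transpose_mul_mul hSig] at hEY
  have hdiag : (Δ - 3) * ∑ a, (Γ₀ᵀ * Sig⁻¹ * Γ₀) a a * M a a = 0 := by
    rcases hC with h | h <;> simp [h]
  have hΛ : (Sig⁻¹ * of fun k l =>
      ∫ ω, (Y ω - ∫ ω', Y ω' ∂μ) * (Γ₀ *ᵥ z ω) k * (Γ₀ *ᵥ z ω) l ∂μ).trace =
      2 * trace (Om * Sig) := by
    rw [trace_mul_integral_mul_mul Sig⁻¹ (g := fun ω => Y ω - ∫ ω', Y ω' ∂μ)
      (hY2.sub (memLp_const _)) (memLp_four_mulVec_apply hz4 Γ₀)]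
    simp_rw [mulVec_dotProduct_mulVec_mulVec]
    rw [integral_sub_integral_mul_of_condExp_eq hx.comap_le hz_meas hz_indep hz4 hm1 hm2 hm3 hm4
      hY2 hmodel' (stronglyMeasurable_comap_dotProduct_mulVec Γ₀ u Sig⁻¹), hdiag,
      trace_mul_transpose_add_trace_mul hSig ((isUnit_iff_isUnit_det _).1 hSigPD.isUnit)]
    ring
  exact ⟨by linarith, hEY⟩

/-- (Intercept part of Proposition 1.)  Under the factor model `x = Γ₀z + u` and the quadratic
regression model `E(Y|x) = α + (x−u)ᵀβ + (x−u)ᵀΩ(x−u)` a.s., if either (C1) `Δ = 3` or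
(C2) `diag(Γ₀ᵀΩΓ₀) = 0`, then the intercept satisfies `α = E Y − tr(Σ⁻¹Λ_y)/2`; equivalently
`E Y = α + tr(ΩΣ)`, where `Λ_y := E[(Y − E Y)(x − u)(x − u)ᵀ]`. -/
theorem intercept_explicit_form {p q : ℕ} {Ω : Type*} [MeasurableSpace Ω]
    (μ : Measure Ω) [IsProbabilityMeasure μ]
    (z : Ω → Fin q → ℝ) (Γ₀ : Matrix (Fin p) (Fin q) ℝ) (u : Fin p → ℝ)
    (Sig Om : Matrix (Fin p) (Fin p) ℝ) (Y : Ω → ℝ) (αc : ℝ) (βv : Fin p → ℝ) (Δ : ℝ)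
    -- the factor z has i.i.d. coordinates with the stated moments
    (hz_meas : ∀ k, Measurable fun ω => z ω k)
    (hz_indep : iIndepFun (fun k ω => z ω k) μ)
    (hz_ident : ∀ k l, IdentDistrib (fun ω => z ω k) (fun ω => z ω l) μ μ)
    (hm1 : ∀ k, ∫ ω, z ω k ∂μ = 0)
    (hm2 : ∀ k, ∫ ω, (z ω k) ^ 2 ∂μ = 1)
    (hm3 : ∀ k, ∫ ω, (z ω k) ^ 3 ∂μ = 0)
    (hm4 : ∀ k, ∫ ω, (z ω k) ^ 4 ∂μ = Δ)
    (hint4 : ∀ k, Integrable (fun ω => (z ω k) ^ 4) μ)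
    -- Γ₀Γ₀ᵀ = Σ with Σ positive definite
    (hSig : Γ₀ * Γ₀ᵀ = Sig) (hSigPD : Sig.PosDef)
    -- Y is a square-integrable response
    (hY_meas : Measurable Y) (hY2 : MemLp Y 2 μ)
    -- Ω is symmetric
    (hOm : Om.IsSymm)
    -- the quadratic regression model, with x := Γ₀ z + u (so that x − u = Γ₀ z)
    (hmodel : μ[Y | MeasurableSpace.comap (fun ω => Γ₀.mulVec (z ω) + u) inferInstance]
        =ᵐ[μ] fun ω => αc + Γ₀.mulVec (z ω) ⬝ᵥ βv +
          Γ₀.mulVec (z ω) ⬝ᵥ Om.mulVec (Γ₀.mulVec (z ω)))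
    -- condition (C1) or condition (C2)
    (hC : Δ = 3 ∨ ∀ k, (Γ₀ᵀ * Om * Γ₀) k k = 0) :
    αc = (∫ ω, Y ω ∂μ) -
        (Sig⁻¹ * Matrix.of fun k l =>
          ∫ ω, (Y ω - ∫ ω', Y ω' ∂μ) * Γ₀.mulVec (z ω) k * Γ₀.mulVec (z ω) l ∂μ).trace / 2 ∧
      (∫ ω, Y ω ∂μ) = αc + (Om * Sig).trace :=
  intercept_explicit_form_general μ z Γ₀ u Sig Om Y αc βv Δ hz_meas hz_indep hm1 hm2 hm3 hm4 hint4
    hSig hSigPD hY2 hmodel hC
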